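/- Fix an integer f ≥ 1, a constant L ∈ (0,1], a bit string a = (a_1,…,a_f) ∈ {0,1}^f, and let μ_{f,a} be the associated payoff function on [0,1] × {0,1}. Let T be a positive integer, let x_1,…,x_T ∈ [0,1] be inputs and y_1,…,y_T ∈ {0,1} be actions. For j ∈ {1,…,f} let M_j = {t ∈ {1,…,T} : |x_t − m_j| ≤ 1/(4f)}. Suppose J' ⊆ {1,…,f} is a set of sections such that for every j ∈ J', at least half of the time steps in M_j choose the wrong action: |{t ∈ M_j : y_t ≠ a_j}| ≥ |M_j|/2. Then the additive regret satisfies ∑_{t=1}^T (μ_{f,a}(x_t, a_{j(x_t)}) − μ_{f,a}(x_t, y_t)) ≥ (L/(8f)) · ∑_{j∈J'} |M_j|. -/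
import Mathlib


/-- The section index `j(x)`: `j(x) = ⌈f·x⌉` for `x ∈ (0,1]` and `j(0) = 1`. -/
noncomputable def sectionIdx (f : ℕ) (x : ℝ) : ℕ := max 1 ⌈(f : ℝ) * x⌉₊

/-- The midpoint `m_j = (j - 1/2)/f` of section `X_j = [(j-1)/f, j/f]`. -/
noncomputable def sectionMid (f j : ℕ) : ℝ := ((j : ℝ) - 1/2) / f

/-- The hard-instance payoff function `μ_{f,a}`: payoff 1 for the optimal action
`a_{j(x)}`, and `1 - L(1/(2f) - |m_{j(x)} - x|)` for the wrong action. -/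
noncomputable def hardPayoff (f : ℕ) (L : ℝ) (a : ℕ → Bool) (x : ℝ) (y : Bool) : ℝ :=
  if y = a (sectionIdx f x) then 1
  else 1 - L * (1 / (2 * f) - |sectionMid f (sectionIdx f x) - x|)

lemma sectionIdx_eq (f : ℕ) (hf : 1 ≤ f) (j : ℕ) (hj1 : 1 ≤ j)
    (x : ℝ) (hx : |x - sectionMid f j| ≤ 1 / (4 * f)) : sectionIdx f x = j := by
  have hf0 : (0:ℝ) < f := by exact_mod_cast hf
  rw [abs_le] at hx
  unfold sectionMid at hx
  have ha : (1:ℝ)/(4*f) * f = 1/4 := by field_simp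
  have hb : ((j:ℝ)-1/2)/f * f = (j:ℝ)-1/2 := by field_simp
  have h1 : (j:ℝ) - 3/4 ≤ f * x := by nlinarith [hx.1, hf0, ha, hb]
  have h2 : (f:ℝ) * x ≤ (j:ℝ) - 1/4 := by nlinarith [hx.2, hf0, ha, hb]
  have hceil : ⌈(f:ℝ) * x⌉₊ = j := by
    rw [Nat.ceil_eq_iff (by omega)]
    constructor
    · rw [Nat.cast_sub hj1, Nat.cast_one]; linarith
    · linarith
  unfold sectionIdx
  rw [hceil]; omega

lemma sectionMid_close (f : ℕ) (hf : 1 ≤ f) (x : ℝ) (hx : x ∈ Set.Icc (0:ℝ) 1) :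
    |sectionMid f (sectionIdx f x) - x| ≤ 1 / (2 * f) := by
  have hf0 : (0:ℝ) < f := by exact_mod_cast hf
  have hfx : 0 ≤ (f:ℝ) * x := mul_nonneg hf0.le hx.1
  set k := ⌈(f:ℝ) * x⌉₊ with hk
  have hle : (f:ℝ) * x ≤ k := Nat.le_ceil _
  rcases Nat.eq_zero_or_pos k with h0 | hpos
  · have hx0 : (f:ℝ) * x = 0 := by
      rw [h0] at hle; push_cast at hle; linarith
    have hxz : x = 0 := by
      rcases mul_eq_zero.mp hx0 with h | h
      · exact absurd h (ne_of_gt hf0)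
      · exact h
    subst hxz
    have hid : sectionIdx f 0 = 1 := by unfold sectionIdx; simp
    rw [hid]
    unfold sectionMid
    rw [sub_zero]
    have h12 : ((1:ℕ):ℝ) - 1/2 = 1/2 := by norm_num
    rw [h12, abs_of_nonneg (by positivity), div_le_div_iff₀ hf0 (by positivity)]
    linarith
  · have hidx : sectionIdx f x = k := by
      unfold sectionIdx; rw [← hk]; omega
    have hlt : ((k:ℝ) - 1) < f * x := by
      have h1 : (k - 1 : ℕ) < k := by omega
      have h2 := (Nat.lt_ceil.mp (by rw [← hk]; exact h1))
      rwa [Nat.cast_sub hpos, Nat.cast_one] at h2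
    rw [hidx]
    unfold sectionMid
    rw [abs_le]
    have hb : ((k:ℝ)-1/2)/f * f = (k:ℝ)-1/2 := by field_simp
    have hc : (1:ℝ)/(2*f) * f = 1/2 := by field_simp
    constructor
    · nlinarith [hle, hf0, hb, hc]
    · nlinarith [hlt, hf0, hb, hc]

/-- Deterministic core of Lemma 'neg-error': if for every section `j ∈ J'` at least half
of the time steps in `M_j = {t : |x_t - m_j| ≤ 1/(4f)}` choose the wrong action, then the
additive regret is at least `(L/(8f)) · ∑_{j ∈ J'} |M_j|`. -/
theorem stmt_8 (f : ℕ) (hf : 1 ≤ f) (L : ℝ) (hL : L ∈ Set.Ioc (0 : ℝ) 1)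
    (a : ℕ → Bool) (T : ℕ) (hT : 0 < T)
    (x : Fin T → ℝ) (hx : ∀ t, x t ∈ Set.Icc (0 : ℝ) 1)
    (y : Fin T → Bool)
    (M : ℕ → Finset (Fin T))
    (hM : ∀ j, M j = Finset.univ.filter (fun t => |x t - sectionMid f j| ≤ 1 / (4 * f)))
    (J' : Finset ℕ) (hJ' : J' ⊆ Finset.Icc 1 f)
    (hhalf : ∀ j ∈ J', ((M j).card : ℝ) / 2 ≤ ((M j).filter (fun t => y t ≠ a j)).card) :
    (L / (8 * f)) * ∑ j ∈ J', ((M j).card : ℝ) ≤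
      ∑ t, (hardPayoff f L a (x t) (a (sectionIdx f (x t))) - hardPayoff f L a (x t) (y t)) := by
  obtain ⟨hL0, hL1⟩ := hL
  have hf0 : (0:ℝ) < f := by exact_mod_cast hf
  set g : Fin T → ℝ := fun t =>
    hardPayoff f L a (x t) (a (sectionIdx f (x t))) - hardPayoff f L a (x t) (y t) with hg
  have hopt : ∀ t, hardPayoff f L a (x t) (a (sectionIdx f (x t))) = 1 := by
    intro t; unfold hardPayoff; rw [if_pos rfl]
  have hidx : ∀ j ∈ J', ∀ t ∈ M j, sectionIdx f (x t) = j := by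
    intro j hj t ht
    rw [hM j, Finset.mem_filter] at ht
    have hj1 : 1 ≤ j := (Finset.mem_Icc.mp (hJ' hj)).1
    exact sectionIdx_eq f hf j hj1 (x t) ht.2
  have hg0 : ∀ t, 0 ≤ g t := by
    intro t
    simp only [hg]
    rw [hopt]
    unfold hardPayoff
    by_cases h : y t = a (sectionIdx f (x t))
    · rw [if_pos h]; norm_num
    · rw [if_neg h]
      have hclose := sectionMid_close f hf (x t) (hx t)
      nlinarith [hL0.le, hclose]
  have hglb : ∀ j ∈ J', ∀ t ∈ (M j).filter (fun t => y t ≠ a j), L / (4*f) ≤ g t := by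
    intro j hj t ht
    rw [Finset.mem_filter] at ht
    have hidxt := hidx j hj t ht.1
    have hclose : |x t - sectionMid f j| ≤ 1/(4*f) := by
      have h := ht.1; rw [hM j, Finset.mem_filter] at h; exact h.2
    simp only [hg]
    rw [hopt]
    unfold hardPayoff
    rw [hidxt, if_neg ht.2]
    have habs : |sectionMid f j - x t| ≤ 1/(4*f) := by rwa [abs_sub_comm]
    have h1 : L / (4*f) ≤ L * (1/(2*f) - |sectionMid f j - x t|) := by
      rw [div_eq_mul_one_div]
      apply mul_le_mul_of_nonneg_left _ (le_of_lt hL0)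
      have he : (1:ℝ)/(4*f) = 1/(2*f) - 1/(4*f) := by field_simp; ring
      rw [he]
      linarith
    linarith
  set S : ℕ → Finset (Fin T) := fun j => (M j).filter (fun t => y t ≠ a j) with hS
  have hdisj : ∀ j ∈ J', ∀ j' ∈ J', j ≠ j' → Disjoint (S j) (S j') := by
    intro j hj j' hj' hne
    rw [Finset.disjoint_left]
    intro t ht ht'
    rw [hS, Finset.mem_filter] at ht ht'
    have := hidx j hj t ht.1
    have := hidx j' hj' t ht'.1
    omega
  calc (L / (8 * f)) * ∑ j ∈ J', ((M j).card : ℝ)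
      = ∑ j ∈ J', (L/(4*f)) * (((M j).card : ℝ)/2) := by
        rw [Finset.mul_sum]; apply Finset.sum_congr rfl; intro j _
        rw [show (8:ℝ)*f = (4*f)*2 by ring, ← div_div]; ring
    _ ≤ ∑ j ∈ J', (L/(4*f)) * ((S j).card : ℝ) := by
        apply Finset.sum_le_sum
        intro j hj
        exact mul_le_mul_of_nonneg_left (hhalf j hj) (by positivity)
    _ ≤ ∑ j ∈ J', ∑ t ∈ S j, g t := by
        apply Finset.sum_le_sum
        intro j hj
        have h := Finset.card_nsmul_le_sum (S j) g (L/(4*f)) (hglb j hj)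
        rw [nsmul_eq_mul] at h
        rw [mul_comm]
        exact h
    _ = ∑ t ∈ J'.biUnion S, g t := (Finset.sum_biUnion hdisj).symm
    _ ≤ ∑ t, g t := by
        apply Finset.sum_le_sum_of_subset_of_nonneg (Finset.subset_univ _)
        intro t _ _
        exact hg0 t
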